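/- arXiv:1605.06396 — 3 statements merged into one kernel-verified Lean document; each statement's English description precedes it below -/
import Mathlib

section
/- For any input distribution Q_X, channel Q_{Y|X}, and rate R > I(X;Y), where X and Y have finite supports, there exist constants γ₁ > 0 and γ₂ > 0 such that for all sufficiently large n, the probability (over the random i.i.d. codebook 𝒞 of size 2^{nR}) that the total variation distance ‖P_{Y^n|𝒞} − Q_{Y^n}‖_TV exceeds e^{−γ₁ n} is at most e^{−e^{γ₂ n}}. -/
open Finset Real
open scoped BigOperators Classical

noncomputable section SoftCovering

/-- `p` is a probability mass function on the finite type `α`. -/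
def IsPMF {α : Type*} [Fintype α] (p : α → ℝ) : Prop :=
  (∀ a, 0 ≤ p a) ∧ ∑ a, p a = 1

variable {𝒳 𝒴 : Type*} [Fintype 𝒳] [Fintype 𝒴]

/-- The output distribution `Q_Y` on `𝒴` induced by the input distribution `Q_X`
and the channel `Q_{Y|X}`. -/
def outDist (QX : 𝒳 → ℝ) (QYX : 𝒳 → 𝒴 → ℝ) (y : 𝒴) : ℝ := ∑ x, QX x * QYX x y

/-- The `n`-fold i.i.d. product of a distribution `p`. -/
def prodDist {α : Type*} [Fintype α] (p : α → ℝ) (n : ℕ) (xs : Fin n → α) : ℝ :=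
  ∏ i, p (xs i)

/-- The `n`-fold memoryless channel: `Q_{Y^n|X^n = xs}(ys)`. -/
def chanProd (QYX : 𝒳 → 𝒴 → ℝ) (n : ℕ) (xs : Fin n → 𝒳) (ys : Fin n → 𝒴) : ℝ :=
  ∏ i, QYX (xs i) (ys i)

/-- The information density `ı_{X;Y}(x;y) = log₂ (Q_{Y|X}(y|x) / Q_Y(y))`, in bits. -/
def infoDensity (QX : 𝒳 → ℝ) (QYX : 𝒳 → 𝒴 → ℝ) (x : 𝒳) (y : 𝒴) : ℝ :=
  Real.logb 2 (QYX x y / outDist QX QYX y)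

/-- The mutual information `I(X;Y)` of `(X,Y) ~ Q_X Q_{Y|X}`, in bits. -/
def mutualInfo (QX : 𝒳 → ℝ) (QYX : 𝒳 → 𝒴 → ℝ) : ℝ :=
  ∑ x, ∑ y, QX x * QYX x y * infoDensity QX QYX x y

/-- The variance `V` of the information density under `(X,Y) ~ Q_X Q_{Y|X}`. -/
def infoVar (QX : 𝒳 → ℝ) (QYX : 𝒳 → 𝒴 → ℝ) : ℝ :=
  ∑ x, ∑ y, QX x * QYX x y * (infoDensity QX QYX x y - mutualInfo QX QYX) ^ 2

/-- The centered third absolute moment `ρ` of the information density. -/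
def infoThird (QX : 𝒳 → ℝ) (QYX : 𝒳 → 𝒴 → ℝ) : ℝ :=
  ∑ x, ∑ y, QX x * QYX x y * |infoDensity QX QYX x y - mutualInfo QX QYX| ^ 3

/-- The Rényi divergence of order `a` between `Q_{X,Y} = Q_X Q_{Y|X}` and the product
of its marginals `Q_X Q_Y`, in bits. -/
def renyiDiv (QX : 𝒳 → ℝ) (QYX : 𝒳 → 𝒴 → ℝ) (a : ℝ) : ℝ :=
  (a - 1)⁻¹ * Real.logb 2 (∑ x, ∑ y,
    (QX x * QYX x y) ^ a * (QX x * outDist QX QYX y) ^ (1 - a))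

/-- Membership in the jointly typical set
`𝒜_ε = {(x^n,y^n) : (1/n) log₂ (Q_{Y^n|X^n=x^n}(y^n)/Q_{Y^n}(y^n)) ≤ I(X;Y) + ε}`. -/
def JTypical (QX : 𝒳 → ℝ) (QYX : 𝒳 → 𝒴 → ℝ) (n : ℕ) (ε : ℝ)
    (xs : Fin n → 𝒳) (ys : Fin n → 𝒴) : Prop :=
  (n : ℝ)⁻¹ * Real.logb 2 (chanProd QYX n xs ys / prodDist (outDist QX QYX) n ys)
    ≤ mutualInfo QX QYX + ε

/-- The probability that `(X^n, Y^n) ~ Q_{X^n} Q_{Y^n|X^n}` is outside `𝒜_ε`. -/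
def atypProb (QX : 𝒳 → ℝ) (QYX : 𝒳 → 𝒴 → ℝ) (n : ℕ) (ε : ℝ) : ℝ :=
  ∑ xs : Fin n → 𝒳, ∑ ys : Fin n → 𝒴,
    if ¬ JTypical QX QYX n ε xs ys then prodDist QX n xs * chanProd QYX n xs ys else 0

/-- The induced output distribution `P_{Y^n|C} = 2^{-nR} ∑_m Q_{Y^n|X^n = x^n(m)}`
of a codebook `C` of size `M = 2^{nR}` (so `2^{-nR} = 1/M`). -/
def inducedDist (QYX : 𝒳 → 𝒴 → ℝ) (n M : ℕ) (C : Fin M → Fin n → 𝒳)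
    (ys : Fin n → 𝒴) : ℝ :=
  (M : ℝ)⁻¹ * ∑ m, chanProd QYX n (C m) ys

/-- The typical part `P_{C,1}(y^n) = 2^{-nR} ∑_m Q_{Y^n|X^n=x^n(m)}(y^n) 1{(x^n(m),y^n) ∈ 𝒜_ε}`. -/
def Ptyp (QX : 𝒳 → ℝ) (QYX : 𝒳 → 𝒴 → ℝ) (n M : ℕ) (ε : ℝ)
    (C : Fin M → Fin n → 𝒳) (ys : Fin n → 𝒴) : ℝ :=
  (M : ℝ)⁻¹ * ∑ m, if JTypical QX QYX n ε (C m) ys then chanProd QYX n (C m) ys else 0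

/-- The atypical part `P_{C,2}(y^n) = 2^{-nR} ∑_m Q_{Y^n|X^n=x^n(m)}(y^n) 1{(x^n(m),y^n) ∉ 𝒜_ε}`. -/
def Patyp (QX : 𝒳 → ℝ) (QYX : 𝒳 → 𝒴 → ℝ) (n M : ℕ) (ε : ℝ)
    (C : Fin M → Fin n → 𝒳) (ys : Fin n → 𝒴) : ℝ :=
  (M : ℝ)⁻¹ * ∑ m, if ¬ JTypical QX QYX n ε (C m) ys then chanProd QYX n (C m) ys else 0

/-- The density `D_{C,1}(y^n) = P_{C,1}(y^n)/Q_{Y^n}(y^n)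
= 2^{-nR} ∑_m (Q_{Y^n|X^n=x^n(m)}(y^n)/Q_{Y^n}(y^n)) 1{(x^n(m),y^n) ∈ 𝒜_ε}`. -/
def Dtyp (QX : 𝒳 → ℝ) (QYX : 𝒳 → 𝒴 → ℝ) (n M : ℕ) (ε : ℝ)
    (C : Fin M → Fin n → 𝒳) (ys : Fin n → 𝒴) : ℝ :=
  (M : ℝ)⁻¹ * ∑ m, if JTypical QX QYX n ε (C m) ys then
    chanProd QYX n (C m) ys / prodDist (outDist QX QYX) n ys else 0

/-- Total variation distance `(1/2) ∑_y |P y - Q y|` on a finite type. -/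
def tvDist {β : Type*} [Fintype β] (P Q : β → ℝ) : ℝ := (1 / 2) * ∑ y, |P y - Q y|

/-- Probability of an event `E` over the random codebook of `M` codewords drawn
i.i.d. from `Q_{X^n}`. -/
def cbProb (QX : 𝒳 → ℝ) (n M : ℕ) (E : (Fin M → Fin n → 𝒳) → Prop) : ℝ :=
  ∑ C : Fin M → Fin n → 𝒳, if E C then ∏ m, prodDist QX n (C m) else 0

/-- `𝒬(x)`: one minus the standard normal cumulative distribution function. -/
def gaussQ (x : ℝ) : ℝ :=
  (Real.sqrt (2 * Real.pi))⁻¹ * ∫ t in Set.Ioi x, Real.exp (-(t ^ 2 / 2))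

/-- `𝒬⁻¹`, the inverse of `𝒬`. -/
def gaussQInv : ℝ → ℝ := Function.invFun gaussQ

/-!
Split `P_{Y^n|𝒞}` into the part `P_{𝒞,1}` coming from jointly typical pairs and the rest
`P_{𝒞,2}`. If `P_{𝒞,1} ≤ (1 + δ) Q_{Y^n}` pointwise and `P_{𝒞,2}` has mass at most `δ`, the
total variation distance is at most `2δ`. Each of these conditions fails only when an empirical
average over the `M` i.i.d. codewords exceeds its mean: the mass of `P_{𝒞,2}` averages terms in
`[0, 1]` whose mean, the atypical probability, is itself exponentially small by a Chernoff bound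
for the information density; for each `y^n`, `D_{𝒞,1}(y^n)` averages terms in
`[0, 2^{n(I+ε)}]` of mean at most `1`. A multiplicative Chernoff bound makes every failure
probability at most `exp(-M δ² / (16 · 2^{n(I+ε)}))`, which is doubly exponentially small for
`M ≥ 2^{nR}` with `R > I + ε`, and a union bound over the `|𝒴|^n + 1` events only costs a
single exponential factor.
-/

theorem IsPMF.prodDist {α : Type*} [Fintype α] {p : α → ℝ} (hp : IsPMF p) (n : ℕ) :
    IsPMF (prodDist p n) :=
  ⟨fun _ => prod_nonneg fun _ _ => hp.1 _, by
    simp only [_root_.prodDist]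
    rw [← Fintype.sum_pow, hp.2, one_pow]⟩

theorem IsPMF.outDist {QX : 𝒳 → ℝ} {QYX : 𝒳 → 𝒴 → ℝ} (hQX : IsPMF QX)
    (hQYX : ∀ x, IsPMF (QYX x)) : IsPMF (outDist QX QYX) := by
  refine ⟨fun y => sum_nonneg fun x _ => mul_nonneg (hQX.1 x) ((hQYX x).1 y), ?_⟩
  simp only [_root_.outDist]
  rw [sum_comm]
  simp only [← mul_sum, (hQYX _).2, mul_one, hQX.2]

theorem chanProd_nonneg {𝒳 𝒴 : Type*} [Fintype 𝒴] {QYX : 𝒳 → 𝒴 → ℝ} (hQYX : ∀ x, IsPMF (QYX x))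
    (n : ℕ) (xs : Fin n → 𝒳) (ys : Fin n → 𝒴) : 0 ≤ chanProd QYX n xs ys :=
  prod_nonneg fun _ _ => (hQYX _).1 _

theorem sum_chanProd {𝒳 𝒴 : Type*} [Fintype 𝒴] {QYX : 𝒳 → 𝒴 → ℝ}
    (hQYX : ∀ x, IsPMF (QYX x)) (n : ℕ) (xs : Fin n → 𝒳) : ∑ ys, chanProd QYX n xs ys = 1 := by
  simp only [chanProd]
  rw [← Fintype.prod_sum (fun i y => QYX (xs i) y)]
  simp [(hQYX _).2]

theorem sum_prodDist_mul_chanProd (QX : 𝒳 → ℝ) (QYX : 𝒳 → 𝒴 → ℝ) (n : ℕ)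
    (ys : Fin n → 𝒴) :
    ∑ xs, prodDist QX n xs * chanProd QYX n xs ys = prodDist (outDist QX QYX) n ys := by
  simp only [prodDist, chanProd, outDist, ← prod_mul_distrib]
  exact (Fintype.prod_sum fun i x => QX x * QYX x (ys i)).symm

section IID

variable {X : Type*} [Fintype X]

-- `cbProb QX n M` is `iidProb (prodDist QX n) M` by definition.
def iidProb (w : X → ℝ) (M : ℕ) (E : (Fin M → X) → Prop) : ℝ :=
  ∑ C : Fin M → X, if E C then ∏ m, w (C m) else 0

theorem iidProb_le_sum {w : X → ℝ} (hw : ∀ x, 0 ≤ w x) {M : ℕ} {ι : Type*} [Fintype ι]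
    {E : (Fin M → X) → Prop} {F : ι → (Fin M → X) → Prop}
    (h : ∀ C, (∀ m, 0 < w (C m)) → E C → ∃ i, F i C) :
    iidProb w M E ≤ ∑ i, iidProb w M (F i) := by
  simp only [iidProb]
  rw [sum_comm]
  refine sum_le_sum fun C _ => ?_
  have hC : 0 ≤ ∏ m, w (C m) := prod_nonneg fun _ _ => hw _
  have hF : ∀ i, 0 ≤ if F i C then ∏ m, w (C m) else 0 := fun i => by split_ifs <;> simp [hC]
  split_ifs with hE
  · by_cases hpos : ∀ m, 0 < w (C m)
    · obtain ⟨i, hi⟩ := h C hpos hE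
      calc ∏ m, w (C m) = if F i C then ∏ m, w (C m) else 0 := (if_pos hi).symm
        _ ≤ _ := single_le_sum (fun j _ => hF j) (mem_univ i)
    · obtain ⟨m, hm⟩ := not_forall.mp hpos
      exact (prod_eq_zero (mem_univ m) (le_antisymm (not_lt.mp hm) (hw _))).trans_le
        (sum_nonneg fun i _ => hF i)
  · exact sum_nonneg fun i _ => hF i

theorem iidProb_mono {w : X → ℝ} (hw : ∀ x, 0 ≤ w x) {M : ℕ} {E F : (Fin M → X) → Prop}
    (h : ∀ C, (∀ m, 0 < w (C m)) → E C → F C) : iidProb w M E ≤ iidProb w M F := by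
  simpa using iidProb_le_sum (ι := Unit) (F := fun _ => F) hw fun C hC hE => ⟨(), h C hC hE⟩

theorem iidProb_lt_sum_le_exp_mul_mgf_pow {w : X → ℝ} (hw : ∀ x, 0 ≤ w x) (g : X → ℝ)
    {s : ℝ} (hs : 0 ≤ s) (t : ℝ) (M : ℕ) :
    iidProb w M (fun C => M * t < ∑ m, g (C m))
      ≤ exp (-(s * (M * t))) * (∑ x, w x * exp (s * g x)) ^ M := by
  rw [Fintype.sum_pow, mul_sum]
  refine sum_le_sum fun C _ => ?_
  have hC : 0 ≤ ∏ m, w (C m) := prod_nonneg fun _ _ => hw _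
  have hexp : exp (-(s * (M * t))) * ∏ m, w (C m) * exp (s * g (C m))
      = exp (s * (∑ m, g (C m) - M * t)) * ∏ m, w (C m) := by
    rw [prod_mul_distrib, ← exp_sum, ← mul_sum, mul_left_comm, ← exp_add]
    ring_nf
  rw [hexp]
  split_ifs with hE
  · exact le_mul_of_one_le_left hC (one_le_exp (mul_nonneg hs (by linarith)))
  · positivity

theorem sum_mul_exp_mul_le {w g : X → ℝ} (hw : IsPMF w) {s b : ℝ} (hs : 0 ≤ s)
    (hg0 : ∀ x, 0 ≤ g x) (hgb : ∀ x, g x ≤ b) (hsb : s * b ≤ 1) :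
    ∑ x, w x * exp (s * g x) ≤ exp ((s + s ^ 2 * b) * ∑ x, w x * g x) := by
  have hpt : ∀ x, exp (s * g x) ≤ 1 + (s + s ^ 2 * b) * g x := fun x => by
    have hsg : |s * g x| ≤ 1 := by
      rw [abs_of_nonneg (mul_nonneg hs (hg0 x))]
      nlinarith [hgb x, hg0 x]
    have hquad : s * g x * (s * g x) ≤ s ^ 2 * b * g x := by
      nlinarith [mul_le_mul_of_nonneg_left (hgb x) (mul_nonneg (sq_nonneg s) (hg0 x))]
    nlinarith [(abs_le.mp (Real.abs_exp_sub_one_sub_id_le hsg)).2]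
  calc ∑ x, w x * exp (s * g x) ≤ ∑ x, w x * (1 + (s + s ^ 2 * b) * g x) :=
        sum_le_sum fun x _ => mul_le_mul_of_nonneg_left (hpt x) (hw.1 x)
    _ = 1 + (s + s ^ 2 * b) * ∑ x, w x * g x := by
        simp only [mul_add, mul_one, sum_add_distrib, hw.2, mul_sum]
        exact congrArg _ (sum_congr rfl fun x _ => by ring)
    _ ≤ _ := by linarith [add_one_le_exp ((s + s ^ 2 * b) * ∑ x, w x * g x)]

theorem iidProb_lt_sum_le {w g : X → ℝ} (hw : IsPMF w) {b δ t : ℝ} (hb : 0 < b)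
    (hg0 : ∀ x, 0 ≤ g x) (hgb : ∀ x, g x ≤ b) (hμ : ∑ x, w x * g x ≤ 1) (hδ : 0 < δ)
    (hδ2 : δ ≤ 2) (ht : ∑ x, w x * g x + δ ≤ t) (M : ℕ) :
    iidProb w M (fun C => M * t < ∑ m, g (C m)) ≤ exp (-(M * δ ^ 2 / (4 * b))) := by
  set μ := ∑ x, w x * g x
  set s := δ / (2 * b) with hs_def
  have hs : 0 ≤ s := by positivity
  have hsb : s * b = δ / 2 := by rw [hs_def]; field_simp
  have hexponent : (s + s ^ 2 * b) * μ - s * t ≤ -(δ ^ 2 / (4 * b)) := by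
    have h1 : s * (s * b) * μ ≤ s * (δ / 2) := by
      rw [hsb]; exact mul_le_of_le_one_right (by positivity) hμ
    have h2 : s * (μ + δ) ≤ s * t := mul_le_mul_of_nonneg_left ht hs
    have h3 : s * δ = 2 * (δ ^ 2 / (4 * b)) := by rw [hs_def]; field_simp; ring
    nlinarith
  calc iidProb w M (fun C => M * t < ∑ m, g (C m))
      ≤ exp (-(s * (M * t))) * (∑ x, w x * exp (s * g x)) ^ M :=
        iidProb_lt_sum_le_exp_mul_mgf_pow hw.1 g hs t M
    _ ≤ exp (-(s * (M * t))) * exp ((s + s ^ 2 * b) * μ) ^ M := by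
        have hmgf : 0 ≤ ∑ x, w x * exp (s * g x) :=
          sum_nonneg fun x _ => mul_nonneg (hw.1 x) (exp_pos _).le
        gcongr
        exact sum_mul_exp_mul_le hw hs hg0 hgb (by linarith)
    _ = exp (M * ((s + s ^ 2 * b) * μ - s * t)) := by
        rw [← exp_nat_mul, ← exp_add]; ring_nf
    _ ≤ exp (-(M * δ ^ 2 / (4 * b))) := by
        rw [exp_le_exp]
        calc (M : ℝ) * ((s + s ^ 2 * b) * μ - s * t) ≤ M * -(δ ^ 2 / (4 * b)) :=
              mul_le_mul_of_nonneg_left hexponent M.cast_nonneg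
          _ = -(M * δ ^ 2 / (4 * b)) := by ring

theorem exists_iidProb_lt_sum_le_exp {w : X → ℝ} (hw : IsPMF w) (u : X → ℝ) {ε : ℝ}
    (hε : 0 < ε) : ∃ c > 0, ∀ n : ℕ,
      iidProb w n (fun C => n * (∑ x, w x * u x + ε) < ∑ i, u (C i)) ≤ exp (-(c * n)) := by
  -- Rescale `u` affinely into `[0, 1]` to apply the Chernoff bound above.
  set K := ∑ x, |u x|
  have hK : ∀ x, |u x| ≤ K := fun x => single_le_sum (fun y _ => abs_nonneg (u y)) (mem_univ x)
  set b := max (2 * K) ε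
  have hb : 0 < b := lt_max_of_lt_right hε
  set g := fun x => (u x + K) / b
  have hg0 : ∀ x, 0 ≤ g x := fun x => div_nonneg (by linarith [neg_abs_le (u x), hK x]) hb.le
  have hg1 : ∀ x, g x ≤ 1 := fun x =>
    (div_le_one hb).mpr (by linarith [le_abs_self (u x), hK x, le_max_left (2 * K) ε])
  have hμ : ∑ x, w x * g x = (∑ x, w x * u x + K) / b := by
    simp only [g, mul_div_assoc', ← sum_div, mul_add, sum_add_distrib, ← sum_mul, hw.2, one_mul]
  have hmean : ∑ x, w x * u x ≤ K :=
    calc ∑ x, w x * u x ≤ ∑ x, w x * K :=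
          sum_le_sum fun x _ => mul_le_mul_of_nonneg_left ((le_abs_self _).trans (hK x)) (hw.1 x)
      _ = K := by rw [← sum_mul, hw.2, one_mul]
  have hμ1 : ∑ x, w x * g x ≤ 1 := by
    rw [hμ, div_le_one hb]; linarith [le_max_left (2 * K) ε]
  have hδ2 : ε / b ≤ 2 := ((div_le_one hb).mpr (le_max_right _ _)).trans one_le_two
  refine ⟨(ε / b) ^ 2 / 4, by positivity, fun n => ?_⟩
  calc iidProb w n (fun C => n * (∑ x, w x * u x + ε) < ∑ i, u (C i))
      ≤ iidProb w n (fun C => n * (∑ x, w x * g x + ε / b) < ∑ i, g (C i)) := by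
        refine iidProb_mono hw.1 fun C _ hC => ?_
        simp only [g, hμ, ← sum_div, sum_add_distrib, sum_const, card_univ, Fintype.card_fin,
          nsmul_eq_mul]
        rw [← add_div, mul_div_assoc', div_lt_div_iff_of_pos_right hb]
        linarith
    _ ≤ exp (-(n * (ε / b) ^ 2 / (4 * 1))) :=
        iidProb_lt_sum_le hw one_pos hg0 hg1 hμ1 (div_pos hε hb) hδ2 le_rfl n
    _ = exp (-((ε / b) ^ 2 / 4 * n)) := by ring_nf

end IID

theorem sub_le_mul_log_div {a c : ℝ} (ha : 0 ≤ a) (hc : 0 ≤ c) (hac : 0 < a → 0 < c) :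
    a - c ≤ a * log (a / c) := by
  rcases ha.eq_or_lt with rfl | ha
  · simpa using hc
  have hlog := one_sub_inv_le_log_of_pos (div_pos ha (hac ha))
  rw [inv_div] at hlog
  calc a - c = a * (1 - c / a) := by field_simp
    _ ≤ a * log (a / c) := mul_le_mul_of_nonneg_left hlog ha.le

theorem mul_le_outDist {QX : 𝒳 → ℝ} {QYX : 𝒳 → 𝒴 → ℝ} (hQX : IsPMF QX)
    (hQYX : ∀ x, IsPMF (QYX x)) (x : 𝒳) (y : 𝒴) : QX x * QYX x y ≤ outDist QX QYX y :=
  single_le_sum (f := fun x => QX x * QYX x y) (fun x _ => mul_nonneg (hQX.1 x) ((hQYX x).1 y))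
    (mem_univ x)

theorem mutualInfo_nonneg {QX : 𝒳 → ℝ} {QYX : 𝒳 → 𝒴 → ℝ} (hQX : IsPMF QX)
    (hQYX : ∀ x, IsPMF (QYX x)) : 0 ≤ mutualInfo QX QYX := by
  have hQY := hQX.outDist hQYX
  have hterm : ∀ x y, QX x * (QYX x y - outDist QX QYX y)
      ≤ QX x * QYX x y * log (QYX x y / outDist QX QYX y) := fun x y => by
    rcases (hQX.1 x).eq_or_lt with h | h
    · simp [← h]
    rw [mul_assoc]
    refine mul_le_mul_of_nonneg_left (sub_le_mul_log_div ((hQYX x).1 y) (hQY.1 y) fun hy => ?_) h.le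
    exact (mul_pos h hy).trans_le (mul_le_outDist hQX hQYX x y)
  have hsum : ∑ x, ∑ y, QX x * (QYX x y - outDist QX QYX y) = 0 := by
    simp [mul_sub, ← mul_sum, (hQYX _).2, hQY.2]
  have hI : mutualInfo QX QYX
      = (∑ x, ∑ y, QX x * QYX x y * log (QYX x y / outDist QX QYX y)) / log 2 := by
    simp only [mutualInfo, infoDensity, logb, sum_div, mul_div_assoc]
  rw [hI]
  exact div_nonneg (hsum ▸ sum_le_sum fun x _ => sum_le_sum fun y _ => hterm x y)
    (log_nonneg one_le_two)

def jointDist (QX : 𝒳 → ℝ) (QYX : 𝒳 → 𝒴 → ℝ) (p : 𝒳 × 𝒴) : ℝ := QX p.1 * QYX p.1 p.2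

theorem IsPMF.jointDist {QX : 𝒳 → ℝ} {QYX : 𝒳 → 𝒴 → ℝ} (hQX : IsPMF QX)
    (hQYX : ∀ x, IsPMF (QYX x)) : IsPMF (jointDist QX QYX) := by
  refine ⟨fun p => mul_nonneg (hQX.1 _) ((hQYX _).1 _), ?_⟩
  simp [_root_.jointDist, Fintype.sum_prod_type, ← mul_sum, (hQYX _).2, hQX.2]

theorem sum_jointDist_mul_infoDensity (QX : 𝒳 → ℝ) (QYX : 𝒳 → 𝒴 → ℝ) :
    ∑ p, jointDist QX QYX p * infoDensity QX QYX p.1 p.2 = mutualInfo QX QYX :=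
  Fintype.sum_prod_type _

theorem atypProb_eq_iidProb (QX : 𝒳 → ℝ) (QYX : 𝒳 → 𝒴 → ℝ) (n : ℕ) (ε : ℝ) :
    atypProb QX QYX n ε = iidProb (jointDist QX QYX) n
      (fun C => ¬ JTypical QX QYX n ε (fun i => (C i).1) (fun i => (C i).2)) := by
  rw [atypProb, ← Fintype.sum_prod_type',
    ← (Equiv.arrowProdEquivProdArrow (Fin n) (fun _ => 𝒳) (fun _ => 𝒴)).sum_comp]
  simp only [iidProb, jointDist, prodDist, chanProd, prod_mul_distrib,
    Equiv.arrowProdEquivProdArrow_apply]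
  exact sum_congr rfl fun _ _ => by congr

theorem logb_chanProd_div_prodDist (QX : 𝒳 → ℝ) (QYX : 𝒳 → 𝒴 → ℝ) {n : ℕ}
    {xs : Fin n → 𝒳} {ys : Fin n → 𝒴}
    (h : ∀ i, QYX (xs i) (ys i) / outDist QX QYX (ys i) ≠ 0) :
    logb 2 (chanProd QYX n xs ys / prodDist (outDist QX QYX) n ys)
      = ∑ i, infoDensity QX QYX (xs i) (ys i) := by
  rw [chanProd, prodDist, ← prod_div_distrib, logb_prod _ _ fun i _ => h i]
  rfl

theorem exists_atypProb_le_exp {QX : 𝒳 → ℝ} {QYX : 𝒳 → 𝒴 → ℝ} (hQX : IsPMF QX)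
    (hQYX : ∀ x, IsPMF (QYX x)) {ε : ℝ} (hε : 0 < ε) :
    ∃ c > 0, ∀ n : ℕ, atypProb QX QYX n ε ≤ exp (-(c * n)) := by
  have hw := hQX.jointDist hQYX
  obtain ⟨c, hc, hbound⟩ :=
    exists_iidProb_lt_sum_le_exp hw (fun p => infoDensity QX QYX p.1 p.2) hε
  refine ⟨c, hc, fun n => ?_⟩
  rw [atypProb_eq_iidProb]
  refine (iidProb_mono hw.1 fun C hC hatyp => ?_).trans (hbound n)
  rw [sum_jointDist_mul_infoDensity]
  rcases n.eq_zero_or_pos with rfl | hn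
  · refine absurd ?_ hatyp
    simp only [JTypical, CharP.cast_eq_zero, inv_zero, zero_mul]
    linarith [mutualInfo_nonneg hQX hQYX]
  have hratio : ∀ i, QYX (C i).1 (C i).2 / outDist QX QYX (C i).2 ≠ 0 := fun i =>
    div_ne_zero (right_ne_zero_of_mul (hC i).ne')
      ((hC i).trans_le (mul_le_outDist hQX hQYX _ _)).ne'
  rwa [JTypical, not_le, logb_chanProd_div_prodDist QX QYX hratio,
    lt_inv_mul_iff₀ (by exact_mod_cast hn)] at hatyp

theorem chanProd_div_prodDist_le_of_JTypical {QX : 𝒳 → ℝ} {QYX : 𝒳 → 𝒴 → ℝ} {n : ℕ}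
    (hn : 0 < n) {ε : ℝ} {xs : Fin n → 𝒳} {ys : Fin n → 𝒴} (hJ : JTypical QX QYX n ε xs ys) :
    chanProd QYX n xs ys / prodDist (outDist QX QYX) n ys
      ≤ 2 ^ (n * (mutualInfo QX QYX + ε)) := by
  set r := chanProd QYX n xs ys / prodDist (outDist QX QYX) n ys
  rcases le_or_gt r 0 with hr | hr
  · exact hr.trans (rpow_pos_of_pos two_pos _).le
  calc r = 2 ^ logb 2 r := (rpow_logb two_pos (by norm_num) hr).symm
    _ ≤ _ := rpow_le_rpow_of_exponent_le one_le_two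
      ((inv_mul_le_iff₀ (by exact_mod_cast hn)).mp hJ)

theorem cbProb_lt_Dtyp_le {QX : 𝒳 → ℝ} {QYX : 𝒳 → 𝒴 → ℝ} (hQX : IsPMF QX)
    (hQYX : ∀ x, IsPMF (QYX x)) {n M : ℕ} (hn : 0 < n) (hM : 0 < M) {ε δ : ℝ} (hδ : 0 < δ)
    (hδ2 : δ ≤ 2) {ys : Fin n → 𝒴} (hy : 0 < prodDist (outDist QX QYX) n ys) :
    cbProb QX n M (fun C => 1 + δ < Dtyp QX QYX n M ε C ys)
      ≤ exp (-(M * δ ^ 2 / (4 * 2 ^ (n * (mutualInfo QX QYX + ε))))) := by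
  set Q := prodDist (outDist QX QYX) n ys
  set g : (Fin n → 𝒳) → ℝ := fun xs =>
    if JTypical QX QYX n ε xs ys then chanProd QYX n xs ys / Q else 0
  have hratio : ∀ xs, 0 ≤ chanProd QYX n xs ys / Q := fun xs =>
    div_nonneg (chanProd_nonneg hQYX n xs ys) hy.le
  have hg0 : ∀ xs, 0 ≤ g xs := fun xs => by
    simp only [g]; split_ifs <;> simp [hratio xs]
  have hgb : ∀ xs, g xs ≤ 2 ^ (n * (mutualInfo QX QYX + ε)) := fun xs => by
    simp only [g]
    split_ifs with hJ
    · exact chanProd_div_prodDist_le_of_JTypical hn hJ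
    · exact (rpow_pos_of_pos two_pos _).le
  have hμ : ∑ xs, prodDist QX n xs * g xs ≤ 1 :=
    calc ∑ xs, prodDist QX n xs * g xs ≤ ∑ xs, prodDist QX n xs * (chanProd QYX n xs ys / Q) :=
          sum_le_sum fun xs _ => mul_le_mul_of_nonneg_left
            (by simp only [g]; split_ifs <;> simp [hratio xs]) ((hQX.prodDist n).1 xs)
      _ = 1 := by
          simp only [mul_div_assoc', ← sum_div, sum_prodDist_mul_chanProd, Q, div_self hy.ne']
  refine (iidProb_mono (hQX.prodDist n).1 fun C _ hC => ?_).trans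
    (iidProb_lt_sum_le (hQX.prodDist n) (rpow_pos_of_pos two_pos _) hg0 hgb hμ hδ hδ2
      (show _ ≤ 1 + δ by linarith) M)
  exact (lt_inv_mul_iff₀ (by exact_mod_cast hM)).mp hC

theorem cbProb_lt_sum_Patyp_le {QX : 𝒳 → ℝ} {QYX : 𝒳 → 𝒴 → ℝ} (hQX : IsPMF QX)
    (hQYX : ∀ x, IsPMF (QYX x)) {n M : ℕ} (hM : 0 < M) {ε δ τ : ℝ} (hδ : 0 < δ)
    (hδ2 : δ ≤ 2) (hτ : atypProb QX QYX n ε + δ ≤ τ) :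
    cbProb QX n M (fun C => τ < ∑ ys, Patyp QX QYX n M ε C ys) ≤ exp (-(M * δ ^ 2 / 4)) := by
  set g : (Fin n → 𝒳) → ℝ := fun xs =>
    ∑ ys, if ¬ JTypical QX QYX n ε xs ys then chanProd QYX n xs ys else 0
  have hterm : ∀ xs ys, 0 ≤ (if ¬ JTypical QX QYX n ε xs ys then chanProd QYX n xs ys else 0)
      ∧ (if ¬ JTypical QX QYX n ε xs ys then chanProd QYX n xs ys else 0)
        ≤ chanProd QYX n xs ys := fun xs ys => by
    split_ifs <;> simp [chanProd_nonneg hQYX n xs ys]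
  have hg0 : ∀ xs, 0 ≤ g xs := fun xs => sum_nonneg fun ys _ => (hterm xs ys).1
  have hg1 : ∀ xs, g xs ≤ 1 := fun xs =>
    (sum_le_sum fun ys _ => (hterm xs ys).2).trans_eq (sum_chanProd hQYX n xs)
  have hμ : ∑ xs, prodDist QX n xs * g xs = atypProb QX QYX n ε := by
    simp only [g, atypProb, mul_sum, mul_ite, mul_zero]
  have hμ1 : ∑ xs, prodDist QX n xs * g xs ≤ 1 :=
    calc ∑ xs, prodDist QX n xs * g xs ≤ ∑ xs, prodDist QX n xs :=
          sum_le_sum fun xs _ => mul_le_of_le_one_right ((hQX.prodDist n).1 xs) (hg1 xs)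
      _ = 1 := (hQX.prodDist n).2
  have hbound := iidProb_lt_sum_le (hQX.prodDist n) one_pos hg0 hg1 hμ1 hδ hδ2 (hμ ▸ hτ) M
  rw [mul_one] at hbound
  refine (iidProb_mono (hQX.prodDist n).1 fun C _ hC => ?_).trans hbound
  have hmean : ∑ ys, Patyp QX QYX n M ε C ys = (M : ℝ)⁻¹ * ∑ m, g (C m) := by
    simp only [Patyp, ← mul_sum, g]
    rw [sum_comm]
  rwa [hmean, lt_inv_mul_iff₀ (by exact_mod_cast hM)] at hC

theorem tvDist_le_of_le_one_add_mul {β : Type*} [Fintype β] {P P₁ P₂ Q : β → ℝ} {δ : ℝ}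
    (hδ : 0 ≤ δ) (hQ : ∀ y, 0 ≤ Q y) (hP : ∀ y, P y = P₁ y + P₂ y) (hP₂ : ∀ y, 0 ≤ P₂ y)
    (hP₁ : ∀ y, P₁ y ≤ (1 + δ) * Q y) (hmass : ∑ y, P y = ∑ y, Q y) :
    tvDist P Q ≤ δ * ∑ y, Q y + ∑ y, P₂ y := by
  have hpt : ∀ y, |P y - Q y| ≤ 2 * δ * Q y - (P₁ y - Q y) + P₂ y := fun y => by
    rw [hP y, abs_le]
    constructor <;> nlinarith [hP₁ y, hP₂ y, mul_nonneg hδ (hQ y)]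
  have hP₁sum : ∑ y, P₁ y = ∑ y, Q y - ∑ y, P₂ y := by
    rw [← hmass, eq_sub_iff_add_eq, ← sum_add_distrib]
    exact sum_congr rfl fun y _ => (hP y).symm
  calc tvDist P Q ≤ 1 / 2 * ∑ y, (2 * δ * Q y - (P₁ y - Q y) + P₂ y) := by
        rw [tvDist]; gcongr with y; exact hpt y
    _ = δ * ∑ y, Q y + ∑ y, P₂ y := by
        simp only [sum_add_distrib, sum_sub_distrib, ← mul_sum, hP₁sum]; ring

theorem inducedDist_eq_Ptyp_add_Patyp (QX : 𝒳 → ℝ) (QYX : 𝒳 → 𝒴 → ℝ) (n M : ℕ) (ε : ℝ)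
    (C : Fin M → Fin n → 𝒳) (ys : Fin n → 𝒴) :
    inducedDist QYX n M C ys = Ptyp QX QYX n M ε C ys + Patyp QX QYX n M ε C ys := by
  rw [inducedDist, Ptyp, Patyp, ← mul_add, ← sum_add_distrib]
  congr 1
  exact sum_congr rfl fun m _ => by split_ifs <;> simp

theorem sum_inducedDist {𝒳 𝒴 : Type*} [Fintype 𝒴] {QYX : 𝒳 → 𝒴 → ℝ}
    (hQYX : ∀ x, IsPMF (QYX x)) {n M : ℕ} (hM : 0 < M) (C : Fin M → Fin n → 𝒳) : ∑ ys, inducedDist QYX n M C ys = 1 := by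
  simp only [inducedDist, ← mul_sum]
  rw [sum_comm]
  simp [sum_chanProd hQYX, hM.ne']

theorem chanProd_eq_zero_of_prodDist_outDist_eq_zero {QX : 𝒳 → ℝ} {QYX : 𝒳 → 𝒴 → ℝ}
    (hQX : IsPMF QX) (hQYX : ∀ x, IsPMF (QYX x)) {n : ℕ} {xs : Fin n → 𝒳} {ys : Fin n → 𝒴}
    (hx : 0 < prodDist QX n xs) (hy : prodDist (outDist QX QYX) n ys = 0) :
    chanProd QYX n xs ys = 0 := by
  obtain ⟨i, -, hi⟩ := prod_eq_zero_iff.mp hy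
  have hQXi : 0 < QX (xs i) :=
    (hQX.1 _).lt_of_ne' (prod_ne_zero_iff.mp hx.ne' i (mem_univ i))
  have hQYXi : QX (xs i) * QYX (xs i) (ys i) ≤ 0 := hi ▸ mul_le_outDist hQX hQYX _ _
  exact prod_eq_zero (mem_univ i)
    (le_antisymm (nonpos_of_mul_nonpos_right hQYXi hQXi) ((hQYX _).1 _))

theorem Ptyp_le_of_Dtyp_le {QX : 𝒳 → ℝ} {QYX : 𝒳 → 𝒴 → ℝ} (hQX : IsPMF QX)
    (hQYX : ∀ x, IsPMF (QYX x)) {n M : ℕ} {ε δ : ℝ} {C : Fin M → Fin n → 𝒳}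
    (hC : ∀ m, 0 < prodDist QX n (C m))
    (hD : ∀ ys, 0 < prodDist (outDist QX QYX) n ys → Dtyp QX QYX n M ε C ys ≤ 1 + δ)
    (ys : Fin n → 𝒴) : Ptyp QX QYX n M ε C ys ≤ (1 + δ) * prodDist (outDist QX QYX) n ys := by
  rcases ((hQX.outDist hQYX).prodDist n).1 ys |>.eq_or_lt with hy | hy
  · have hchan : ∀ m, chanProd QYX n (C m) ys = 0 := fun m =>
      chanProd_eq_zero_of_prodDist_outDist_eq_zero hQX hQYX (hC m) hy.symm
    simp [Ptyp, hchan, ← hy]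
  have hPD : Ptyp QX QYX n M ε C ys
      = Dtyp QX QYX n M ε C ys * prodDist (outDist QX QYX) n ys := by
    simp only [Ptyp, Dtyp, mul_assoc, sum_mul, ite_mul, zero_mul, div_mul_cancel₀ _ hy.ne']
  rw [hPD]
  exact mul_le_mul_of_nonneg_right (hD ys hy) hy.le

theorem tvDist_inducedDist_le {QX : 𝒳 → ℝ} {QYX : 𝒳 → 𝒴 → ℝ} (hQX : IsPMF QX)
    (hQYX : ∀ x, IsPMF (QYX x)) {n M : ℕ} (hM : 0 < M) {ε δ : ℝ} (hδ : 0 ≤ δ)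
    {C : Fin M → Fin n → 𝒳} (hC : ∀ m, 0 < prodDist QX n (C m))
    (hD : ∀ ys, 0 < prodDist (outDist QX QYX) n ys → Dtyp QX QYX n M ε C ys ≤ 1 + δ)
    (hatyp : ∑ ys, Patyp QX QYX n M ε C ys ≤ δ) :
    tvDist (inducedDist QYX n M C) (prodDist (outDist QX QYX) n) ≤ 2 * δ := by
  have hQ := (hQX.outDist hQYX).prodDist n
  have hPatyp : ∀ ys, 0 ≤ Patyp QX QYX n M ε C ys := fun ys =>
    mul_nonneg (by positivity) (sum_nonneg fun m _ => by
      split_ifs <;> simp [chanProd_nonneg hQYX n (C m) ys])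
  have h := tvDist_le_of_le_one_add_mul hδ hQ.1
    (inducedDist_eq_Ptyp_add_Patyp QX QYX n M ε C) hPatyp (Ptyp_le_of_Dtyp_le hQX hQYX hC hD)
    ((sum_inducedDist hQYX hM C).trans hQ.2.symm)
  rw [hQ.2, mul_one] at h
  linarith

theorem cbProb_lt_tvDist_le_add_sum {QX : 𝒳 → ℝ} {QYX : 𝒳 → 𝒴 → ℝ} (hQX : IsPMF QX)
    (hQYX : ∀ x, IsPMF (QYX x)) {n M : ℕ} (hM : 0 < M) {ε δ : ℝ} (hδ : 0 ≤ δ) :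
    cbProb QX n M (fun C => 2 * δ < tvDist (inducedDist QYX n M C) (prodDist (outDist QX QYX) n))
      ≤ cbProb QX n M (fun C => δ < ∑ ys, Patyp QX QYX n M ε C ys)
        + ∑ ys, cbProb QX n M (fun C =>
            0 < prodDist (outDist QX QYX) n ys ∧ 1 + δ < Dtyp QX QYX n M ε C ys) := by
  refine (iidProb_le_sum (ι := Option (Fin n → 𝒴)) (hQX.prodDist n).1
    (F := fun o C => o.elim (δ < ∑ ys, Patyp QX QYX n M ε C ys) fun ys =>
      0 < prodDist (outDist QX QYX) n ys ∧ 1 + δ < Dtyp QX QYX n M ε C ys)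
    fun C hC hE => ?_).trans_eq (Fintype.sum_option _)
  by_contra! hF
  refine hE.not_ge (tvDist_inducedDist_le hQX hQYX hM hδ hC (fun ys hy => ?_)
    (not_lt.mp (hF none)))
  exact not_lt.mp fun h => hF (some ys) ⟨hy, h⟩

theorem cbProb_lt_tvDist_le {QX : 𝒳 → ℝ} {QYX : 𝒳 → 𝒴 → ℝ} (hQX : IsPMF QX)
    (hQYX : ∀ x, IsPMF (QYX x)) {n M : ℕ} (hn : 0 < n) (hM : 0 < M) {ε δ : ℝ} (hε : 0 ≤ ε)
    (hδ : 0 < δ) (hδ2 : δ ≤ 2) (hatyp : atypProb QX QYX n ε ≤ δ / 2) :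
    cbProb QX n M (fun C => 2 * δ < tvDist (inducedDist QYX n M C) (prodDist (outDist QX QYX) n))
      ≤ (1 + Fintype.card 𝒴 ^ n)
        * exp (-(M * δ ^ 2 / (16 * 2 ^ (n * (mutualInfo QX QYX + ε))))) := by
  set b : ℝ := 2 ^ (n * (mutualInfo QX QYX + ε))
  have hb : 1 ≤ b := one_le_rpow one_le_two
    (mul_nonneg n.cast_nonneg (add_nonneg (mutualInfo_nonneg hQX hQYX) hε))
  set T := exp (-(M * δ ^ 2 / (16 * b)))
  have hatyp_le : cbProb QX n M (fun C => δ < ∑ ys, Patyp QX QYX n M ε C ys) ≤ T := by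
    refine (cbProb_lt_sum_Patyp_le hQX hQYX hM (half_pos hδ) (by linarith) (by linarith)).trans
      (exp_le_exp.mpr (neg_le_neg ?_))
    rw [div_pow, mul_div_assoc', div_div]
    exact div_le_div_of_nonneg_left (by positivity) (by positivity) (by norm_num; linarith)
  have htyp_le : ∀ ys, cbProb QX n M (fun C =>
      0 < prodDist (outDist QX QYX) n ys ∧ 1 + δ < Dtyp QX QYX n M ε C ys) ≤ T := fun ys => by
    by_cases hy : 0 < prodDist (outDist QX QYX) n ys
    · simp only [hy, true_and]
      exact (cbProb_lt_Dtyp_le hQX hQYX hn hM hδ hδ2 hy).trans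
        (exp_le_exp.mpr (neg_le_neg (div_le_div_of_nonneg_left (by positivity) (by positivity)
          (by linarith))))
    · simp only [hy, false_and, cbProb, if_false, sum_const_zero]
      positivity
  calc _ ≤ T + ∑ _ys : Fin n → 𝒴, T :=
        (cbProb_lt_tvDist_le_add_sum hQX hQYX hM hδ.le).trans (add_le_add hatyp_le (sum_le_sum fun ys _ => htyp_le ys))
    _ = (1 + Fintype.card 𝒴 ^ n) * T := by
        simp only [sum_const, card_univ, Fintype.card_fun, Fintype.card_fin, nsmul_eq_mul]
        push_cast; ring

open Filter Asymptotics in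
theorem eventually_add_mul_le_exp (a b : ℝ) {c : ℝ} (hc : 0 < c) :
    ∀ᶠ n : ℕ in atTop, a + b * n ≤ exp (c * n) := by
  have h : (fun x : ℝ => a + b * x) =o[atTop] fun x => exp (c * x) := by
    simpa using ((isLittleO_pow_exp_pos_mul_atTop 0 hc).const_mul_left a).add
      ((isLittleO_pow_exp_pos_mul_atTop 1 hc).const_mul_left b)
  filter_upwards [tendsto_natCast_atTop_atTop.eventually (h.bound one_pos)] with n hn
  simpa [abs_of_pos (exp_pos _)] using (le_abs_self _).trans hn

open Filter in
theorem eventually_one_add_pow_mul_exp_le (K : ℕ) {γ : ℝ} (hγ : 0 < γ) :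
    ∀ᶠ n : ℕ in atTop,
      (1 + (K : ℝ) ^ n) * exp (-(exp (2 * γ * n) / 64)) ≤ exp (-exp (γ * n)) := by
  filter_upwards [eventually_add_mul_le_exp 128 0 hγ,
    eventually_add_mul_le_exp (log 2) (log (K + 1)) hγ] with n h128 hlog
  set x := exp (γ * n)
  have hsq : exp (2 * γ * n) = x ^ 2 := by rw [sq, ← exp_add]; ring_nf
  have hK : 1 + (K : ℝ) ^ n ≤ exp x :=
    calc 1 + (K : ℝ) ^ n ≤ 2 * (K + 1) ^ n := by
          have h1 : (1 : ℝ) ≤ (K + 1) ^ n := one_le_pow₀ (by linarith [K.cast_nonneg (α := ℝ)])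
          have h2 : (K : ℝ) ^ n ≤ (K + 1) ^ n := by gcongr; linarith
          linarith
      _ = exp (log 2 + n * log (K + 1)) := by
          rw [exp_add, exp_log two_pos, exp_nat_mul, exp_log (by positivity)]
      _ ≤ exp x := exp_le_exp.mpr (by simpa [mul_comm] using hlog)
  calc (1 + (K : ℝ) ^ n) * exp (-(exp (2 * γ * n) / 64)) ≤ exp x * exp (-(x ^ 2 / 64)) := by
        rw [hsq]; gcongr
    _ = exp (x - x ^ 2 / 64) := by rw [← exp_add]; ring_nf
    _ ≤ exp (-x) := exp_le_exp.mpr (by nlinarith)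

theorem exp_mul_div_le_mul_sq_div_rpow {n : ℕ} {M R s γ : ℝ} (hM : (2 : ℝ) ^ (n * R) ≤ M)
    (hγ : 4 * γ ≤ (R - s) * log 2) :
    exp (2 * γ * n) / 64 ≤ M * (exp (-(γ * n)) / 2) ^ 2 / (16 * 2 ^ (n * s)) := by
  rw [rpow_def_of_pos two_pos] at hM ⊢
  have key : exp (2 * γ * n) * exp (log 2 * (n * s))
      ≤ exp (log 2 * (n * R)) * exp (-(γ * n)) ^ 2 := by
    rw [← exp_nat_mul, ← exp_add, ← exp_add, exp_le_exp]
    push_cast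
    nlinarith [mul_le_mul_of_nonneg_right hγ n.cast_nonneg]
  rw [le_div_iff₀ (by positivity)]
  calc exp (2 * γ * n) / 64 * (16 * exp (log 2 * (n * s)))
      = exp (2 * γ * n) * exp (log 2 * (n * s)) / 4 := by ring
    _ ≤ exp (log 2 * (n * R)) * exp (-(γ * n)) ^ 2 / 4 := by gcongr
    _ ≤ M * exp (-(γ * n)) ^ 2 / 4 := by gcongr
    _ = M * (exp (-(γ * n)) / 2) ^ 2 := by ring

/-- **Soft covering with exponential convergence (Theorem 1, first part).**
For any `Q_X`, `Q_{Y|X}` and rate `R > I(X;Y)` (finite alphabets), there exist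
`γ₁ > 0` and `γ₂ > 0` such that for `n` large enough, the probability over the
random i.i.d. codebook `𝒞` of size `2^{nR}` that
`‖P_{Y^n|𝒞} − Q_{Y^n}‖_TV > e^{−γ₁ n}` is at most `e^{−e^{γ₂ n}}`. -/
theorem soft_covering_high_probability_exponential
    {𝒳 𝒴 : Type*} [Fintype 𝒳] [Fintype 𝒴]
    (QX : 𝒳 → ℝ) (QYX : 𝒳 → 𝒴 → ℝ) (hQX : IsPMF QX) (hQYX : ∀ x, IsPMF (QYX x))
    (R : ℝ) (hR : mutualInfo QX QYX < R) :
    ∃ γ₁ > (0 : ℝ), ∃ γ₂ > (0 : ℝ), ∃ N : ℕ, ∀ n ≥ N,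
      cbProb QX n ⌈(2 : ℝ) ^ ((n : ℝ) * R)⌉₊ (fun C =>
          Real.exp (-(γ₁ * n)) <
            tvDist (inducedDist QYX n ⌈(2 : ℝ) ^ ((n : ℝ) * R)⌉₊ C)
              (prodDist (outDist QX QYX) n))
        ≤ Real.exp (-Real.exp (γ₂ * n)) := by
  obtain ⟨η, hη, hIη⟩ : ∃ η > 0, mutualInfo QX QYX + η = R - η :=
    ⟨(R - mutualInfo QX QYX) / 2, by linarith, by ring⟩
  obtain ⟨c, hc, hatyp⟩ := exists_atypProb_le_exp hQX hQYX hη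
  set γ := min (c / 2) (η * log 2 / 4)
  have hγ : 0 < γ := lt_min (half_pos hc) (by positivity)
  have hγc : γ < c := (min_le_left _ _).trans_lt (half_lt_self hc)
  have hγη : 4 * γ ≤ (R - (mutualInfo QX QYX + η)) * log 2 := by
    rw [hIη, sub_sub_cancel]; linarith [min_le_right (c / 2) (η * log 2 / 4)]
  refine ⟨γ, hγ, γ, hγ, Filter.eventually_atTop.mp ?_⟩
  filter_upwards [eventually_add_mul_le_exp 4 0 (sub_pos.mpr hγc),
    eventually_one_add_pow_mul_exp_le (Fintype.card 𝒴) hγ, Filter.eventually_gt_atTop 0]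
    with n h4 htail hn
  have hδ1 : exp (-(γ * n)) ≤ 1 := exp_le_one_iff.mpr (neg_nonpos.mpr (by positivity))
  have hatyp_n : atypProb QX QYX n η ≤ exp (-(γ * n)) / 2 / 2 := by
    have hsplit : exp (-(c * n)) * exp ((c - γ) * n) = exp (-(γ * n)) := by
      rw [← exp_add]; ring_nf
    nlinarith [hatyp n, exp_pos (-(c * n))]
  have hbound := cbProb_lt_tvDist_le hQX hQYX hn
    (Nat.ceil_pos.mpr (rpow_pos_of_pos two_pos ((n : ℝ) * R))) hη.le (by positivity)
    (by linarith) hatyp_n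
  rw [mul_div_cancel₀ _ two_ne_zero] at hbound
  refine hbound.trans (le_trans (mul_le_mul_of_nonneg_left ?_ (by positivity)) htail)
  exact exp_le_exp.mpr (neg_le_neg (exp_mul_div_le_mul_sq_div_rpow (Nat.le_ceil _) hγη))
end SoftCovering
end

section
/- For any ε > 0 and any β₂ > 0, over the random i.i.d. codebook 𝒞 of size 2^{nR}, for every fixed y^n ∈ 𝒴^n the probability that D_{𝒞,1}(y^n) ≥ 1 + 2^{−β₂ n} is at most e^{−(1/3) 2^{n(R − I(X;Y) − ε − 2β₂)}}. -/
open Finset Real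
open scoped BigOperators Classical

noncomputable section SoftCovering

variable {𝒳 𝒴 : Type*} [Fintype 𝒳] [Fintype 𝒴]

lemma sum_fun_prod {β α : Type*} [Fintype β] [Fintype α] [DecidableEq β] (g : β → α → ℝ) :
    ∑ C : β → α, ∏ b, g b (C b) = ∏ b, ∑ a, g b a := by
  rw [Finset.prod_univ_sum]
  rw [Fintype.piFinset_univ]

lemma chernoff_aux {α : Type*} [Fintype α] (p f : α → ℝ) (hp0 : ∀ a, 0 ≤ p a)
    (hp1 : ∑ a, p a = 1) (B δ : ℝ) (hB : 0 < B) (hδ0 : 0 < δ) (hδ1 : δ ≤ 1)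
    (hf0 : ∀ a, 0 ≤ f a) (hfB : ∀ a, f a ≤ B)
    (hμ1 : ∑ a, p a * f a ≤ 1) (M : ℕ) (hMpos : 0 < (M : ℝ)) :
    (∑ C : Fin M → α, if (M : ℝ) * (1 + δ) ≤ ∑ m, f (C m) then ∏ m, p (C m) else 0)
      ≤ Real.exp (-(1/3) * ((M : ℝ) * δ^2 / B)) := by
  classical
  set c : ℝ := 3 * δ / 5 with hcdef
  have hc0 : 0 ≤ c := by rw [hcdef]; positivity
  set s : ℝ := c / B with hsdef
  have hs0 : 0 ≤ s := by rw [hsdef]; positivity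
  set S : ℝ := ∑ a, p a * Real.exp (s * f a) with hSdef
  have hS0 : 0 ≤ S := Finset.sum_nonneg fun a _ => mul_nonneg (hp0 a) (Real.exp_pos _).le
  -- step 1 : Markov / Chernoff
  have step1 : (∑ C : Fin M → α, if (M : ℝ) * (1 + δ) ≤ ∑ m, f (C m)
        then ∏ m, p (C m) else 0)
      ≤ Real.exp (-(s * M * (1 + δ))) * S ^ M := by
    have hbd : ∀ C : Fin M → α,
        (if (M : ℝ) * (1 + δ) ≤ ∑ m, f (C m) then ∏ m, p (C m) else 0)
        ≤ Real.exp (-(s * M * (1 + δ))) * ∏ m, (p (C m) * Real.exp (s * f (C m))) := by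
      intro C
      have hW0 : 0 ≤ ∏ m, p (C m) := Finset.prod_nonneg fun m _ => hp0 _
      have hprodexp : ∏ m, (p (C m) * Real.exp (s * f (C m)))
          = (∏ m, p (C m)) * Real.exp (∑ m, s * f (C m)) := by
        rw [Finset.prod_mul_distrib, Real.exp_sum]
      split
      · rename_i hE
        have hexp : (1 : ℝ) ≤ Real.exp (-(s * M * (1 + δ)) + ∑ m, s * f (C m)) := by
          apply Real.one_le_exp
          rw [← Finset.mul_sum]
          nlinarith [hE, hs0]
        calc ∏ m, p (C m) = (∏ m, p (C m)) * 1 := by rw [mul_one]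
          _ ≤ (∏ m, p (C m)) * Real.exp (-(s * M * (1 + δ)) + ∑ m, s * f (C m)) :=
              mul_le_mul_of_nonneg_left hexp hW0
          _ = Real.exp (-(s * M * (1 + δ))) * ∏ m, (p (C m) * Real.exp (s * f (C m))) := by
              rw [hprodexp, Real.exp_add]; ring
      · have : 0 ≤ ∏ m, (p (C m) * Real.exp (s * f (C m))) :=
          Finset.prod_nonneg fun m _ => mul_nonneg (hp0 _) (Real.exp_pos _).le
        positivity
    calc (∑ C : Fin M → α, if (M : ℝ) * (1 + δ) ≤ ∑ m, f (C m) then ∏ m, p (C m) else 0)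
        ≤ ∑ C : Fin M → α, Real.exp (-(s * M * (1 + δ)))
            * ∏ m, (p (C m) * Real.exp (s * f (C m))) :=
          Finset.sum_le_sum fun C _ => hbd C
      _ = Real.exp (-(s * M * (1 + δ)))
            * ∑ C : Fin M → α, ∏ m, (p (C m) * Real.exp (s * f (C m))) := by
          rw [Finset.mul_sum]
      _ = Real.exp (-(s * M * (1 + δ))) * S ^ M := by
          rw [sum_fun_prod (fun (_ : Fin M) a => p a * Real.exp (s * f a))]
          rw [Finset.prod_const, Finset.card_univ, Fintype.card_fin]
  -- step 2 : bound S
  have hSle : S ≤ Real.exp ((Real.exp c - 1) / B) := by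
    have hec1 : 0 ≤ Real.exp c - 1 := by
      have := Real.one_le_exp hc0; linarith
    have hconv : ∀ a, Real.exp (s * f a) ≤ 1 + (Real.exp c - 1) * (f a / B) := by
      intro a
      have ht0 : 0 ≤ f a / B := div_nonneg (hf0 a) hB.le
      have ht1 : f a / B ≤ 1 := (div_le_one hB).2 (hfB a)
      have harg : s * f a = (1 - f a / B) * 0 + (f a / B) * c := by
        rw [hsdef]; field_simp; ring
      have hcx : Real.exp ((1 - f a / B) * 0 + (f a / B) * c)
          ≤ (1 - f a / B) * Real.exp 0 + (f a / B) * Real.exp c := by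
        have h := convexOn_exp.2 (Set.mem_univ (0 : ℝ)) (Set.mem_univ c)
          (sub_nonneg.2 ht1) ht0 (by ring)
        simpa using h
      rw [harg]
      calc Real.exp ((1 - f a / B) * 0 + (f a / B) * c)
          ≤ (1 - f a / B) * Real.exp 0 + (f a / B) * Real.exp c := hcx
        _ = 1 + (Real.exp c - 1) * (f a / B) := by rw [Real.exp_zero]; ring
    have h1 : S ≤ ∑ a, p a * (1 + (Real.exp c - 1) * (f a / B)) :=
      Finset.sum_le_sum fun a _ => mul_le_mul_of_nonneg_left (hconv a) (hp0 a)
    have h2 : ∑ a, p a * (1 + (Real.exp c - 1) * (f a / B))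
        = 1 + (Real.exp c - 1) / B * ∑ a, p a * f a := by
      calc ∑ a, p a * (1 + (Real.exp c - 1) * (f a / B))
          = ∑ a, (p a + (Real.exp c - 1) / B * (p a * f a)) := by
            apply Finset.sum_congr rfl; intro a _; field_simp
        _ = (∑ a, p a) + (Real.exp c - 1) / B * ∑ a, p a * f a := by
            rw [Finset.sum_add_distrib, Finset.mul_sum]
        _ = 1 + (Real.exp c - 1) / B * ∑ a, p a * f a := by rw [hp1]
    have h3 : (Real.exp c - 1) / B * (∑ a, p a * f a) ≤ (Real.exp c - 1) / B := by
      have := mul_le_mul_of_nonneg_left hμ1 (div_nonneg hec1 hB.le)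
      linarith [this]
    calc S ≤ ∑ a, p a * (1 + (Real.exp c - 1) * (f a / B)) := h1
      _ = 1 + (Real.exp c - 1) / B * ∑ a, p a * f a := h2
      _ ≤ 1 + (Real.exp c - 1) / B := by linarith
      _ ≤ Real.exp ((Real.exp c - 1) / B) := by
          linarith [Real.add_one_le_exp ((Real.exp c - 1) / B)]
  have step3 : S ^ M ≤ Real.exp ((M : ℝ) * ((Real.exp c - 1) / B)) := by
    calc S ^ M ≤ (Real.exp ((Real.exp c - 1) / B)) ^ M := pow_le_pow_left₀ hS0 hSle M
      _ = Real.exp ((M : ℝ) * ((Real.exp c - 1) / B)) := (Real.exp_nat_mul _ M).symm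
  -- step 3 : exponent arithmetic
  have hcexp : Real.exp c ≤ 1 + c + c ^ 2 / 2 + 2 / 9 * c ^ 3 := by
    have habs : |c| ≤ 1 := by rw [abs_of_nonneg hc0, hcdef]; linarith
    have hb := Real.exp_bound habs (n := 3) (by norm_num)
    simp [Finset.sum_range_succ, Nat.factorial] at hb
    have h2 := abs_le.1 hb
    rw [abs_of_nonneg hc0] at h2
    nlinarith [h2.2]
  have hexpineq : -(s * M * (1 + δ)) + (M : ℝ) * ((Real.exp c - 1) / B)
      ≤ -(1/3) * ((M : ℝ) * δ ^ 2 / B) := by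
    have hpoint : -(c * (1 + δ)) + (Real.exp c - 1) ≤ -(δ ^ 2 / 3) := by
      nlinarith [hcexp, hδ0, hδ1, sq_nonneg δ, mul_pos hδ0 hδ0]
    have hBpos := hB
    have h1 : -(s * (1 + δ)) + (Real.exp c - 1) / B ≤ -(1/3) * (δ ^ 2 / B) := by
      rw [hsdef,
        show -(c / B * (1 + δ)) + (Real.exp c - 1) / B
          = (-(c * (1 + δ)) + (Real.exp c - 1)) / B from by ring,
        show -(1/3 : ℝ) * (δ ^ 2 / B) = (-(δ ^ 2 / 3)) / B from by ring]
      exact (div_le_div_iff_of_pos_right hB).2 hpoint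
    calc -(s * M * (1 + δ)) + (M : ℝ) * ((Real.exp c - 1) / B)
        = (M : ℝ) * (-(s * (1 + δ)) + (Real.exp c - 1) / B) := by ring
      _ ≤ (M : ℝ) * (-(1/3) * (δ ^ 2 / B)) := mul_le_mul_of_nonneg_left h1 hMpos.le
      _ = -(1/3) * ((M : ℝ) * δ ^ 2 / B) := by ring
  calc (∑ C : Fin M → α, if (M : ℝ) * (1 + δ) ≤ ∑ m, f (C m) then ∏ m, p (C m) else 0)
      ≤ Real.exp (-(s * M * (1 + δ))) * S ^ M := step1
    _ ≤ Real.exp (-(s * M * (1 + δ))) * Real.exp ((M : ℝ) * ((Real.exp c - 1) / B)) :=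
        mul_le_mul_of_nonneg_left step3 (Real.exp_pos _).le
    _ = Real.exp (-(s * M * (1 + δ)) + (M : ℝ) * ((Real.exp c - 1) / B)) :=
        (Real.exp_add _ _).symm
    _ ≤ Real.exp (-(1/3) * ((M : ℝ) * δ ^ 2 / B)) := Real.exp_le_exp.2 hexpineq

/-- **Chernoff bound for the typical density (Eq. (24)).**
For any `ε > 0` and `β₂ > 0`, and every fixed `y^n`, the probability over the random
codebook `𝒞` of size `M = 2^{nR}` that `D_{𝒞,1}(y^n) ≥ 1 + 2^{−β₂ n}` is at most
`e^{−(1/3) 2^{n(R − I(X;Y) − ε − 2β₂)}}`. -/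
theorem typical_density_chernoff
    {𝒳 𝒴 : Type*} [Fintype 𝒳] [Fintype 𝒴]
    (QX : 𝒳 → ℝ) (QYX : 𝒳 → 𝒴 → ℝ) (hQX : IsPMF QX) (hQYX : ∀ x, IsPMF (QYX x))
    (R : ℝ) (n M : ℕ) (hM : (M : ℝ) = 2 ^ ((n : ℝ) * R))
    (ε : ℝ) (hε : 0 < ε) (β₂ : ℝ) (hβ₂ : 0 < β₂) (ys : Fin n → 𝒴) :
    cbProb QX n M (fun C => 1 + 2 ^ (-(β₂ * n)) ≤ Dtyp QX QYX n M ε C ys)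
      ≤ Real.exp (-(1 / 3) * 2 ^ ((n : ℝ) * (R - mutualInfo QX QYX - ε - 2 * β₂))) := by
  classical
  have two_pos : (0:ℝ) < 2 := by norm_num
  set I := mutualInfo QX QYX with hIdef
  set δ : ℝ := (2:ℝ) ^ (-(β₂ * (n:ℝ))) with hδdef
  set B : ℝ := (2:ℝ) ^ ((n:ℝ) * (I + ε)) with hBdef
  have hB : 0 < B := Real.rpow_pos_of_pos two_pos _
  have hδ0 : 0 < δ := Real.rpow_pos_of_pos two_pos _
  have hδ1 : δ ≤ 1 := by
    apply Real.rpow_le_one_of_one_le_of_nonpos one_le_two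
    have : (0:ℝ) ≤ β₂ * n := mul_nonneg hβ₂.le (Nat.cast_nonneg n)
    linarith
  have hMpos : (0:ℝ) < M := by rw [hM]; exact Real.rpow_pos_of_pos two_pos _
  have hMne : (M:ℝ) ≠ 0 := hMpos.ne'
  set Qn : ℝ := prodDist (outDist QX QYX) n ys with hQndef
  set p : (Fin n → 𝒳) → ℝ := fun xs => prodDist QX n xs with hpdef
  set f : (Fin n → 𝒳) → ℝ := fun xs =>
    if JTypical QX QYX n ε xs ys then chanProd QYX n xs ys / Qn else 0 with hfdef
  have hchan0 : ∀ xs, 0 ≤ chanProd QYX n xs ys := fun xs =>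
    Finset.prod_nonneg fun i _ => (hQYX _).1 _
  have hQn0 : 0 ≤ Qn := Finset.prod_nonneg fun i _ =>
    Finset.sum_nonneg fun x _ => mul_nonneg (hQX.1 x) ((hQYX x).1 _)
  have hp0 : ∀ a, 0 ≤ p a := fun a => Finset.prod_nonneg fun i _ => hQX.1 _
  have hp1 : ∑ a, p a = 1 := by
    rw [hpdef]
    unfold prodDist
    rw [sum_fun_prod (fun (_ : Fin n) (x : 𝒳) => QX x)]
    simp [hQX.2]
  have hf0 : ∀ a, 0 ≤ f a := by
    intro a
    show (if JTypical QX QYX n ε a ys then chanProd QYX n a ys / Qn else 0) ≥ 0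
    split
    · exact div_nonneg (hchan0 a) hQn0
    · exact le_rfl
  have hfB : ∀ a, f a ≤ B := by
    intro a
    show (if JTypical QX QYX n ε a ys then chanProd QYX n a ys / Qn else 0) ≤ B
    split
    · rename_i ht
      rcases le_or_gt (chanProd QYX n a ys / Qn) 0 with hr | hr
      · linarith
      · have hlog : Real.logb 2 (chanProd QYX n a ys / Qn) ≤ (n:ℝ) * (I + ε) := by
          rcases Nat.eq_zero_or_pos n with hn | hn
          · subst hn
            have h1 : chanProd QYX 0 a ys = 1 := by simp [chanProd]
            have h2 : Qn = 1 := by simp [hQndef, prodDist]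
            simp [h1, h2]
          · have hn' : (0:ℝ) < n := by exact_mod_cast hn
            have ht' : (n : ℝ)⁻¹ * Real.logb 2 (chanProd QYX n a ys / Qn) ≤ I + ε := ht
            calc Real.logb 2 (chanProd QYX n a ys / Qn)
                = (n:ℝ) * ((n:ℝ)⁻¹ * Real.logb 2 (chanProd QYX n a ys / Qn)) := by
                  field_simp
              _ ≤ (n:ℝ) * (I + ε) := mul_le_mul_of_nonneg_left ht' hn'.le
        calc chanProd QYX n a ys / Qn
            = (2:ℝ) ^ (Real.logb 2 (chanProd QYX n a ys / Qn)) :=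
              (Real.rpow_logb two_pos (by norm_num) hr).symm
          _ ≤ B := Real.rpow_le_rpow_of_exponent_le one_le_two hlog
    · exact hB.le
  have hμ1 : ∑ a, p a * f a ≤ 1 := by
    have h1 : ∑ a, p a * f a ≤ ∑ a, p a * (chanProd QYX n a ys / Qn) := by
      apply Finset.sum_le_sum
      intro a _
      apply mul_le_mul_of_nonneg_left _ (hp0 a)
      show (if JTypical QX QYX n ε a ys then chanProd QYX n a ys / Qn else 0)
        ≤ chanProd QYX n a ys / Qn
      split
      · exact le_rfl
      · exact div_nonneg (hchan0 a) hQn0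
    have h3 : ∑ a, p a * chanProd QYX n a ys = Qn := by
      rw [hpdef, hQndef]
      unfold prodDist chanProd outDist
      calc ∑ xs : Fin n → 𝒳, (∏ i, QX (xs i)) * ∏ i, QYX (xs i) (ys i)
          = ∑ xs : Fin n → 𝒳, ∏ i, (QX (xs i) * QYX (xs i) (ys i)) := by
            apply Finset.sum_congr rfl
            intro xs _
            rw [Finset.prod_mul_distrib]
        _ = ∏ i, ∑ x, QX x * QYX x (ys i) :=
            sum_fun_prod (fun (i : Fin n) (x : 𝒳) => QX x * QYX x (ys i))
    have h2 : ∑ a, p a * (chanProd QYX n a ys / Qn) = Qn / Qn := by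
      rw [← h3, Finset.sum_div]
      apply Finset.sum_congr rfl
      intro a _
      rw [mul_div_assoc]
    rcases eq_or_ne Qn 0 with h | h
    · calc ∑ a, p a * f a ≤ Qn / Qn := h1.trans_eq h2
        _ ≤ 1 := by rw [h]; norm_num
    · calc ∑ a, p a * f a ≤ Qn / Qn := h1.trans_eq h2
        _ = 1 := div_self h
  have hmain := chernoff_aux p f hp0 hp1 B δ hB hδ0 hδ1 hf0 hfB hμ1 M hMpos
  have hkey : (M:ℝ) * δ ^ 2 / B = 2 ^ ((n:ℝ) * (R - I - ε - 2*β₂)) := by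
    rw [hM, hδdef, hBdef]
    rw [show ((2:ℝ) ^ (-(β₂ * (n:ℝ)))) ^ 2
        = (2:ℝ) ^ ((-(β₂ * (n:ℝ))) * (2:ℕ)) from by
      rw [Real.rpow_mul (by norm_num), Real.rpow_natCast]]
    rw [← Real.rpow_add two_pos, ← Real.rpow_sub two_pos]
    congr 1
    push_cast
    ring
  have hevent : cbProb QX n M (fun C => 1 + δ ≤ Dtyp QX QYX n M ε C ys)
      = ∑ C : Fin M → Fin n → 𝒳,
        if (M : ℝ) * (1 + δ) ≤ ∑ m, f (C m) then ∏ m, p (C m) else 0 := by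
    unfold cbProb
    apply Finset.sum_congr rfl
    intro C _
    have hiff : (1 + δ ≤ Dtyp QX QYX n M ε C ys) ↔ ((M : ℝ) * (1 + δ) ≤ ∑ m, f (C m)) := by
      have hDt : Dtyp QX QYX n M ε C ys = (M:ℝ)⁻¹ * ∑ m, f (C m) := rfl
      rw [hDt]
      rw [inv_mul_eq_div, le_div_iff₀ hMpos]
      constructor <;> intro h <;> linarith
    rw [if_congr hiff rfl rfl]
  rw [hevent, ← hkey]
  exact hmain
end SoftCovering
end

section
/- Fix ε_n > 0 and suppose the probability under (X^n, Y^n) ~ Q_{X^n} Q_{Y^n|X^n} that (X^n, Y^n) ∉ 𝒜_{ε_n} is at most μ_n. Then over the random i.i.d. codebook 𝒞 of size 2^{nR}, the probability that Σ_{y^n} P_{𝒞,2}(y^n) ≥ μ_n (1 + 1/√n) is at most e^{−(μ_n/(3n)) 2^{nR}}. -/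
open Finset Real
open scoped BigOperators Classical

noncomputable section SoftCovering

variable {𝒳 𝒴 : Type*} [Fintype 𝒳] [Fintype 𝒴]

lemma sum_pi_prod' {β : Type*} [Fintype β] {k : ℕ} (g : Fin k → β → ℝ) :
    ∑ xs : Fin k → β, ∏ i, g i (xs i) = ∏ i, ∑ b, g i b := by
  classical
  rw [Finset.prod_univ_sum, Fintype.piFinset_univ]

lemma sum_pi_prod_const' {β : Type*} [Fintype β] {k : ℕ} (g : β → ℝ) :
    ∑ xs : Fin k → β, ∏ i, g (xs i) = (∑ b, g b) ^ k := by
  classical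
  rw [sum_pi_prod', Finset.prod_const, Finset.card_univ, Fintype.card_fin]

lemma exp_interp' {c t : ℝ} (h0 : 0 ≤ c) (h1 : c ≤ 1) :
    Real.exp (t * c) ≤ 1 + c * (Real.exp t - 1) := by
  have := convexOn_exp.2 (Set.mem_univ (0:ℝ)) (Set.mem_univ t)
    (by linarith : (0:ℝ) ≤ 1 - c) h0 (by ring)
  simp only [smul_eq_mul, mul_zero, zero_add, Real.exp_zero, mul_one] at this
  calc Real.exp (t * c) = Real.exp (c * t) := by rw [mul_comm]
    _ ≤ (1 - c) + c * Real.exp t := this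
    _ = 1 + c * (Real.exp t - 1) := by ring

lemma exp_quad_bound' {t : ℝ} (h : |t| ≤ 1) : Real.exp t ≤ 1 + t + (3/4) * t^2 := by
  have hb := Real.exp_bound h (by norm_num : 0 < 2)
  simp [Finset.sum_range_succ, Nat.factorial] at hb
  rw [abs_le] at hb
  nlinarith [sq_abs t, hb.2, abs_nonneg t]

/-- **Chernoff bound for the atypical mass, second-order version (Eq. (40)).**
If the probability of atypicality (for threshold `ε_n`) is at most `μ_n`, then the
probability over the random codebook `𝒞` of size `M = 2^{nR}` that
`∑_{y^n} P_{𝒞,2}(y^n) ≥ μ_n (1 + 1/√n)` is at most `e^{−(μ_n/(3n)) 2^{nR}}`. -/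
theorem atypical_mass_chernoff_second_order
    {𝒳 𝒴 : Type*} [Fintype 𝒳] [Fintype 𝒴]
    (QX : 𝒳 → ℝ) (QYX : 𝒳 → 𝒴 → ℝ) (hQX : IsPMF QX) (hQYX : ∀ x, IsPMF (QYX x))
    (R : ℝ) (n M : ℕ) (hM : (M : ℝ) = 2 ^ ((n : ℝ) * R))
    (εn : ℝ) (hεn : 0 < εn) (μn : ℝ) (hμn : atypProb QX QYX n εn ≤ μn) :
    cbProb QX n M (fun C =>
        μn * (1 + (Real.sqrt ↑n)⁻¹) ≤ ∑ ys, Patyp QX QYX n M εn C ys)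
      ≤ Real.exp (-(μn / (3 * ↑n)) * 2 ^ ((n : ℝ) * R)) := by
  classical
  -- basic positivity facts
  have hq0 : ∀ xs : Fin n → 𝒳, 0 ≤ prodDist QX n xs := fun xs =>
    Finset.prod_nonneg fun i _ => hQX.1 _
  have hqsum : ∑ xs : Fin n → 𝒳, prodDist QX n xs = 1 := by
    unfold prodDist; rw [sum_pi_prod_const', hQX.2, one_pow]
  have hchan0 : ∀ (xs : Fin n → 𝒳) (ys : Fin n → 𝒴), 0 ≤ chanProd QYX n xs ys :=
    fun xs ys => Finset.prod_nonneg fun i _ => (hQYX _).1 _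
  have hchansum : ∀ xs : Fin n → 𝒳, ∑ ys : Fin n → 𝒴, chanProd QYX n xs ys = 1 := by
    intro xs; unfold chanProd; rw [sum_pi_prod']
    simp [(hQYX _).2]
  set f : (Fin n → 𝒳) → ℝ := fun xs => ∑ ys : Fin n → 𝒴,
    if ¬ JTypical QX QYX n εn xs ys then chanProd QYX n xs ys else 0 with hf
  have hf0 : ∀ xs, 0 ≤ f xs := fun xs => Finset.sum_nonneg fun ys _ => by
    split
    · exact hchan0 xs ys
    · exact le_refl _
  have hf1 : ∀ xs, f xs ≤ 1 := fun xs => by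
    have : f xs ≤ ∑ ys : Fin n → 𝒴, chanProd QYX n xs ys := by
      refine Finset.sum_le_sum fun ys _ => ?_
      split
      · exact le_refl _
      · exact hchan0 xs ys
    simpa [hchansum xs] using this
  have hp : atypProb QX QYX n εn = ∑ xs : Fin n → 𝒳, prodDist QX n xs * f xs := by
    unfold atypProb
    refine Finset.sum_congr rfl fun xs _ => ?_
    rw [hf, Finset.mul_sum]
    refine Finset.sum_congr rfl fun ys _ => ?_
    split
    · rfl
    · rw [mul_zero]
  have hp0 : 0 ≤ atypProb QX QYX n εn := by
    rw [hp]
    exact Finset.sum_nonneg fun xs _ => mul_nonneg (hq0 xs) (hf0 xs)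
  have hμ0 : 0 ≤ μn := le_trans hp0 hμn
  have hM0 : 0 < (M : ℝ) := by rw [hM]; positivity
  rw [← hM]
  rcases Nat.eq_zero_or_pos n with hn | hn
  · -- trivial bound for n = 0
    subst hn
    have h1 : cbProb QX 0 M (fun C =>
        μn * (1 + (Real.sqrt (0:ℕ))⁻¹) ≤ ∑ ys, Patyp QX QYX 0 M εn C ys) ≤ 1 := by
      unfold cbProb
      calc (∑ C : Fin M → Fin 0 → 𝒳, if (μn * (1 + (Real.sqrt (0:ℕ))⁻¹) ≤
              ∑ ys, Patyp QX QYX 0 M εn C ys) then ∏ m, prodDist QX 0 (C m) else 0)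
          ≤ ∑ C : Fin M → Fin 0 → 𝒳, ∏ m, prodDist QX 0 (C m) := by
            refine Finset.sum_le_sum fun C _ => ?_
            split
            · exact le_refl _
            · exact Finset.prod_nonneg fun m _ => hq0 _
        _ = 1 := by rw [sum_pi_prod_const', hqsum, one_pow]
    have h2 : -(μn / (3 * ((0:ℕ):ℝ))) * (M:ℝ) = 0 := by norm_num
    calc _ ≤ (1:ℝ) := h1
      _ = Real.exp (-(μn / (3 * ((0:ℕ):ℝ))) * (M:ℝ)) := by rw [h2, Real.exp_zero]
  · -- main case n ≥ 1
    set δ : ℝ := (Real.sqrt n)⁻¹ with hδ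
    have hsq1 : 1 ≤ Real.sqrt n := by
      rw [show (1:ℝ) = Real.sqrt 1 by simp]
      exact Real.sqrt_le_sqrt (by exact_mod_cast hn)
    have hδ0 : 0 < δ := inv_pos.mpr (lt_of_lt_of_le one_pos hsq1)
    have hδ1 : δ ≤ 1 := by
      rw [hδ]
      exact inv_le_one_of_one_le₀ hsq1
    have hδ2 : δ ^ 2 = ((n:ℝ))⁻¹ := by
      rw [hδ, sq, ← mul_inv, Real.mul_self_sqrt (Nat.cast_nonneg n)]
    set t : ℝ := 2 * δ / 3 with ht
    have ht0 : 0 < t := by positivity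
    set a : ℝ := (M:ℝ) * (μn * (1 + δ)) with ha
    -- Step A: indicator ≤ exponential
    have stepA : cbProb QX n M (fun C =>
          μn * (1 + (Real.sqrt n)⁻¹) ≤ ∑ ys, Patyp QX QYX n M εn C ys)
        ≤ ∑ C : Fin M → Fin n → 𝒳,
            Real.exp (t * ((∑ m, f (C m)) - a)) * ∏ m, prodDist QX n (C m) := by
      unfold cbProb
      refine Finset.sum_le_sum fun C _ => ?_
      have hW0 : 0 ≤ ∏ m, prodDist QX n (C m) := Finset.prod_nonneg fun m _ => hq0 _
      split
      · rename_i hE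
        have hPsum : ∑ ys, Patyp QX QYX n M εn C ys = (M:ℝ)⁻¹ * ∑ m, f (C m) := by
          unfold Patyp
          rw [← Finset.mul_sum, Finset.sum_comm]
        have haS : a ≤ ∑ m, f (C m) := by
          rw [hPsum] at hE
          rw [ha]
          calc (M:ℝ) * (μn * (1 + δ)) ≤ (M:ℝ) * ((M:ℝ)⁻¹ * ∑ m, f (C m)) := by
                exact mul_le_mul_of_nonneg_left hE hM0.le
            _ = ∑ m, f (C m) := by field_simp
        have : (1:ℝ) ≤ Real.exp (t * ((∑ m, f (C m)) - a)) :=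
          Real.one_le_exp (mul_nonneg ht0.le (by linarith))
        nlinarith
      · positivity
    -- Step B: factorize the sum
    have stepB : (∑ C : Fin M → Fin n → 𝒳,
            Real.exp (t * ((∑ m, f (C m)) - a)) * ∏ m, prodDist QX n (C m))
        = Real.exp (-(t * a)) *
            (∑ x : Fin n → 𝒳, prodDist QX n x * Real.exp (t * f x)) ^ M := by
      have key : ∀ C : Fin M → Fin n → 𝒳,
          Real.exp (t * ((∑ m, f (C m)) - a)) * ∏ m, prodDist QX n (C m)
          = Real.exp (-(t * a)) * ∏ m, (prodDist QX n (C m) * Real.exp (t * f (C m))) := by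
        intro C
        rw [mul_sub, sub_eq_add_neg, Real.exp_add, Finset.mul_sum, Real.exp_sum,
          Finset.prod_mul_distrib]
        ring
      rw [Finset.sum_congr rfl fun C _ => key C, ← Finset.mul_sum]
      congr 1
      exact sum_pi_prod_const' fun x => prodDist QX n x * Real.exp (t * f x)
    -- Step C: bound the single-letter MGF
    have hpf : ∑ xs : Fin n → 𝒳, prodDist QX n xs * f xs ≤ μn := hp ▸ hμn
    have stepC : (∑ x : Fin n → 𝒳, prodDist QX n x * Real.exp (t * f x))
        ≤ Real.exp (μn * (Real.exp t - 1)) := by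
      have h1 : (∑ x : Fin n → 𝒳, prodDist QX n x * Real.exp (t * f x))
          ≤ ∑ x : Fin n → 𝒳, prodDist QX n x * (1 + f x * (Real.exp t - 1)) :=
        Finset.sum_le_sum fun x _ =>
          mul_le_mul_of_nonneg_left (exp_interp' (hf0 x) (hf1 x)) (hq0 x)
      have h2 : (∑ x : Fin n → 𝒳, prodDist QX n x * (1 + f x * (Real.exp t - 1)))
          = 1 + (∑ xs : Fin n → 𝒳, prodDist QX n xs * f xs) * (Real.exp t - 1) := by
        calc (∑ x : Fin n → 𝒳, prodDist QX n x * (1 + f x * (Real.exp t - 1)))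
            = ∑ x : Fin n → 𝒳, (prodDist QX n x
                + prodDist QX n x * f x * (Real.exp t - 1)) :=
              Finset.sum_congr rfl fun x _ => by ring
          _ = (∑ x : Fin n → 𝒳, prodDist QX n x)
              + (∑ x : Fin n → 𝒳, prodDist QX n x * f x) * (Real.exp t - 1) := by
              rw [Finset.sum_add_distrib, Finset.sum_mul]
          _ = 1 + (∑ xs : Fin n → 𝒳, prodDist QX n xs * f xs) * (Real.exp t - 1) := by
              rw [hqsum]
      have het : 0 ≤ Real.exp t - 1 := by
        have := Real.one_le_exp ht0.le; linarith
      have h3 : (∑ xs : Fin n → 𝒳, prodDist QX n xs * f xs) * (Real.exp t - 1)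
          ≤ μn * (Real.exp t - 1) := mul_le_mul_of_nonneg_right hpf het
      have h4 : 1 + μn * (Real.exp t - 1) ≤ Real.exp (μn * (Real.exp t - 1)) := by
        have := Real.add_one_le_exp (μn * (Real.exp t - 1)); linarith
      linarith
    -- Step D: combine
    have hbase : 0 ≤ ∑ x : Fin n → 𝒳, prodDist QX n x * Real.exp (t * f x) :=
      Finset.sum_nonneg fun x _ => mul_nonneg (hq0 x) (Real.exp_nonneg _)
    have stepD : (∑ x : Fin n → 𝒳, prodDist QX n x * Real.exp (t * f x)) ^ M
        ≤ Real.exp ((M:ℝ) * (μn * (Real.exp t - 1))) := by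
      calc (∑ x : Fin n → 𝒳, prodDist QX n x * Real.exp (t * f x)) ^ M
          ≤ Real.exp (μn * (Real.exp t - 1)) ^ M := pow_le_pow_left₀ hbase stepC M
        _ = Real.exp ((M:ℝ) * (μn * (Real.exp t - 1))) := (Real.exp_nat_mul _ M).symm
    -- Step E: final exponent comparison
    have hkey : Real.exp t - 1 - t * (1 + δ) ≤ -(δ ^ 2) / 3 := by
      have habs : |t| ≤ 1 := by
        rw [abs_of_pos ht0, ht]; linarith
      have hb := exp_quad_bound' habs
      rw [ht]; nlinarith [sq_nonneg δ]
    have hexp : (M:ℝ) * (μn * (Real.exp t - 1)) + -(t * a) ≤ -(μn / (3 * n)) * M := by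
      have hMμ : 0 ≤ (M:ℝ) * μn := mul_nonneg hM0.le hμ0
      have := mul_le_mul_of_nonneg_left hkey hMμ
      have hrw : -(μn / (3 * n)) * M = (M:ℝ) * μn * (-(δ^2)/3) := by
        rw [hδ2]; field_simp
      rw [hrw, ha]; nlinarith
    calc cbProb QX n M (fun C =>
          μn * (1 + (Real.sqrt n)⁻¹) ≤ ∑ ys, Patyp QX QYX n M εn C ys)
        ≤ ∑ C : Fin M → Fin n → 𝒳,
            Real.exp (t * ((∑ m, f (C m)) - a)) * ∏ m, prodDist QX n (C m) := stepA
      _ = Real.exp (-(t * a)) *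
            (∑ x : Fin n → 𝒳, prodDist QX n x * Real.exp (t * f x)) ^ M := stepB
      _ ≤ Real.exp (-(t * a)) * Real.exp ((M:ℝ) * (μn * (Real.exp t - 1))) :=
          mul_le_mul_of_nonneg_left stepD (Real.exp_nonneg _)
      _ = Real.exp ((M:ℝ) * (μn * (Real.exp t - 1)) + -(t * a)) := by
          rw [← Real.exp_add]; ring_nf
      _ ≤ Real.exp (-(μn / (3 * n)) * M) := Real.exp_le_exp.mpr hexp
end SoftCovering
end
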